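/- Let α be an outer partial action of an abelian group G on a ring A such that each D_g, g ∈ G, has local units. Then the partial skew group ring A ⋆_α G is simple if and only if A is G-simple. -/
import Mathlib


/-- A partial action of a group `G` on a (possibly non-unital) ring `A`: a family
of two-sided ideals `D g` and ring isomorphisms `α_g : D g⁻¹ → D g` (encoded as
total maps `act g : A → A` whose behaviour only matters on `D g⁻¹`) satisfying
the partial action axioms. -/
structure RingPartialAction (G A : Type*) [Group G] [NonUnitalRing A] where
  D : G → TwoSidedIdeal A
  act : G → A → A
  D_one : D 1 = ⊤
  act_one : ∀ x : A, act 1 x = x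
  act_mem : ∀ g : G, ∀ x ∈ D g⁻¹, act g x ∈ D g
  act_add : ∀ g : G, ∀ x ∈ D g⁻¹, ∀ y ∈ D g⁻¹, act g (x + y) = act g x + act g y
  act_mul : ∀ g : G, ∀ x ∈ D g⁻¹, ∀ y ∈ D g⁻¹, act g (x * y) = act g x * act g y
  act_inv : ∀ g : G, ∀ x ∈ D g⁻¹, act g⁻¹ (act g x) = x
  act_image : ∀ g h : G,
    act g '' ((D g⁻¹ : Set A) ∩ (D h : Set A)) = (D g : Set A) ∩ (D (g * h) : Set A)
  act_comp : ∀ g h : G, ∀ x : A,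
    x ∈ D h⁻¹ → x ∈ D (g * h)⁻¹ → act g (act h x) = act (g * h) x

namespace RingPartialAction

variable {G A : Type*} [Group G] [NonUnitalRing A] (P : RingPartialAction G A)

/-- An ideal `I` of `A` is `G`-invariant if `α_g (I ∩ D g⁻¹) ⊆ I` for all `g`. -/
def GInvariant (I : TwoSidedIdeal A) : Prop :=
  ∀ g : G, ∀ x ∈ I, x ∈ P.D g⁻¹ → P.act g x ∈ I

/-- `A` is `G`-simple if its only `G`-invariant ideals are `{0}` and `A`. -/
def GSimple : Prop :=
  ∀ I : TwoSidedIdeal A, P.GInvariant I → I = ⊥ ∨ I = ⊤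

/-- The multiplication of the partial skew group ring `A ⋆_α G`, realized on
finitely supported functions `G →₀ A`:
`(a_g δ_g)(b_h δ_h) = α_g (α_{g⁻¹}(a_g) * b_h) δ_{g h}`. -/
noncomputable def skewMul (f h : G →₀ A) : G →₀ A :=
  f.sum fun g a => h.sum fun g' b =>
    Finsupp.single (g * g') (P.act g (P.act g⁻¹ a * b))

/-- The underlying set of the partial skew group ring `A ⋆_α G`: finitely
supported functions `f : G →₀ A` with `f g ∈ D g` for all `g`. -/
def SkewSet : Set (G →₀ A) := {f | ∀ g : G, f g ∈ P.D g}

/-- A (two-sided) ideal of the partial skew group ring. -/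
def IsSkewIdeal (T : Set (G →₀ A)) : Prop :=
  T ⊆ P.SkewSet ∧ (0 : G →₀ A) ∈ T ∧
    (∀ f ∈ T, ∀ h ∈ T, f + h ∈ T) ∧ (∀ f ∈ T, -f ∈ T) ∧
    (∀ f ∈ T, ∀ h ∈ P.SkewSet, P.skewMul f h ∈ T ∧ P.skewMul h f ∈ T)

/-- Simplicity of the partial skew group ring `A ⋆_α G`. -/
def SkewSimple : Prop :=
  ∀ T : Set (G →₀ A), P.IsSkewIdeal T → T = {0} ∨ T = P.SkewSet

/-- Graded simplicity of `A ⋆_α G` with respect to its natural `G`-grading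
`(A ⋆_α G)_g = D_g δ_g`. -/
def SkewGradedSimple : Prop :=
  ∀ T : Set (G →₀ A), P.IsSkewIdeal T →
    (∀ f ∈ T, ∀ g : G, Finsupp.single g (f g) ∈ T) →
    T = {0} ∨ T = P.SkewSet

/-- The partial action is injective: no non-identity `g` is such that
`D g ∩ D g⁻¹` is non-zero and `α_g` restricts to the identity on it. -/
def Injective : Prop :=
  ∀ g : G, g ≠ 1 →
    (∀ x : A, x ∈ P.D g → x ∈ P.D g⁻¹ → P.act g x = x) →
    ∀ x : A, x ∈ P.D g → x ∈ P.D g⁻¹ → x = 0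

/-- `α_g` is inner at an idempotent `u` (viewing `A` as a multiplicative
semigroup): `u ∈ D g⁻¹` and there are `a ∈ u A α_g(u)`, `b ∈ α_g(u) A u` with
`ab = u`, `ba = α_g u` and `α_g x = b * x * a` for all `x ∈ uAu`. -/
def InnerAt (g : G) (u : A) : Prop :=
  u ∈ P.D g⁻¹ ∧ ∃ a b : A,
    (∃ c : A, a = u * c * P.act g u) ∧ (∃ c : A, b = P.act g u * c * u) ∧
    a * b = u ∧ b * a = P.act g u ∧
    ∀ c : A, P.act g (u * c * u) = b * (u * c * u) * a

/-- The partial action is outer: there is a non-zero idempotent `u ∈ A` such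
that `α_g` is outer at `u` for every non-identity `g ∈ G`. -/
def Outer : Prop :=
  ∃ u : A, u ≠ 0 ∧ u * u = u ∧ ∀ g : G, g ≠ 1 → ¬ P.InnerAt g u

end RingPartialAction

/-- A subset `D` of a ring has local units: every finite subset of `D` lies in
`eDe` for an idempotent `e ∈ D`. -/
def HasLocalUnitsOn {A : Type*} [NonUnitalRing A] (D : Set A) : Prop :=
  ∀ s : Finset A, ↑s ⊆ D → ∃ e ∈ D, e * e = e ∧ ∀ x ∈ s, e * x = x ∧ x * e = x


namespace RingPartialAction

section GroupAux

variable {G A : Type*} [Group G] [NonUnitalRing A] (P : RingPartialAction G A)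

lemma act_zero (g : G) : P.act g 0 = 0 := by
  have h0 : (0:A) ∈ P.D g⁻¹ := (P.D g⁻¹).zero_mem
  have h := P.act_add g 0 h0 0 h0
  rw [add_zero] at h
  exact left_eq_add.mp h

lemma mem_D_of_mem (g : G) {x : A} (hx : x ∈ P.D g) : P.act g⁻¹ x ∈ P.D g⁻¹ :=
  P.act_mem g⁻¹ x (by simpa using hx)

lemma act_act_inv (g : G) {x : A} (hx : x ∈ P.D g) : P.act g (P.act g⁻¹ x) = x := by
  have h := P.act_inv g⁻¹ x (by simpa using hx)
  simpa using h

lemma act_mem_mul (g h : G) {x : A} (h1 : x ∈ P.D g⁻¹) (h2 : x ∈ P.D h) :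
    P.act g x ∈ P.D (g * h) := by
  have : P.act g x ∈ (P.D g : Set A) ∩ (P.D (g*h) : Set A) := by
    rw [← P.act_image g h]
    exact ⟨x, ⟨h1, h2⟩, rfl⟩
  exact this.2

lemma sum_single_mul_apply (p : G →₀ A) (F : G → A → A) (hF : ∀ g, F g 0 = 0) (k w : G) :
    (p.sum fun g a => Finsupp.single (g * k) (F g a)) w = F (w * k⁻¹) (p (w * k⁻¹)) := by
  classical
  rw [Finsupp.sum_apply, Finsupp.sum, Finset.sum_eq_single (w * k⁻¹)]
  · rw [Finsupp.single_apply, if_pos (by group)]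
  · intro g _ hne
    rw [Finsupp.single_apply, if_neg]
    intro hgk
    exact hne (by rw [← hgk]; group)
  · intro hw
    rw [Finsupp.notMem_support_iff.mp hw, hF, Finsupp.single_zero, Finsupp.zero_apply]

lemma sum_mul_single_apply (p : G →₀ A) (F : G → A → A) (hF : ∀ g, F g 0 = 0) (k w : G) :
    (p.sum fun g a => Finsupp.single (k * g) (F g a)) w = F (k⁻¹ * w) (p (k⁻¹ * w)) := by
  classical
  rw [Finsupp.sum_apply, Finsupp.sum, Finset.sum_eq_single (k⁻¹ * w)]
  · rw [Finsupp.single_apply, if_pos (by group)]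
  · intro g _ hne
    rw [Finsupp.single_apply, if_neg]
    intro hgk
    exact hne (by rw [← hgk]; group)
  · intro hw
    rw [Finsupp.notMem_support_iff.mp hw, hF, Finsupp.single_zero, Finsupp.zero_apply]

lemma skewMul_single_right (p : G →₀ A) (k : G) (c : A) :
    P.skewMul p (Finsupp.single k c) =
      p.sum fun g a => Finsupp.single (g * k) (P.act g (P.act g⁻¹ a * c)) := by
  unfold skewMul
  refine Finsupp.sum_congr fun g _ => Finsupp.sum_single_index (by simp [P.act_zero])

lemma skewMul_single_right_apply (p : G →₀ A) (k : G) (c : A) (w : G) :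
    P.skewMul p (Finsupp.single k c) w
      = P.act (w * k⁻¹) (P.act (w * k⁻¹)⁻¹ (p (w * k⁻¹)) * c) := by
  rw [P.skewMul_single_right]
  exact sum_single_mul_apply p _ (fun g => by simp [P.act_zero]) k w

lemma skewMul_single_left (k : G) (c : A) (p : G →₀ A) :
    P.skewMul (Finsupp.single k c) p =
      p.sum fun g' b => Finsupp.single (k * g') (P.act k (P.act k⁻¹ c * b)) := by
  unfold skewMul
  exact Finsupp.sum_single_index (by simp [P.act_zero])

lemma skewMul_single_left_apply (k : G) (c : A) (p : G →₀ A) (w : G) :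
    P.skewMul (Finsupp.single k c) p w = P.act k (P.act k⁻¹ c * p (k⁻¹ * w)) := by
  rw [P.skewMul_single_left]
  exact sum_mul_single_apply p _ (fun g => by simp [P.act_zero]) k w

lemma skewMul_apply_mem (S : Set A) (hS0 : (0:A) ∈ S)
    (hadd : ∀ x ∈ S, ∀ y ∈ S, x + y ∈ S)
    (f h : G →₀ A) (w : G)
    (hterm : ∀ g g', g * g' = w → P.act g (P.act g⁻¹ (f g) * h g') ∈ S) :
    P.skewMul f h w ∈ S := by
  classical
  unfold skewMul
  rw [Finsupp.sum_apply, Finsupp.sum]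
  refine Finset.sum_induction _ (· ∈ S) (fun a b ha hb => hadd a ha b hb) hS0 ?_
  intro g _
  rw [Finsupp.sum_apply, Finsupp.sum]
  refine Finset.sum_induction _ (· ∈ S) (fun a b ha hb => hadd a ha b hb) hS0 ?_
  intro g' _
  rw [Finsupp.single_apply]
  split
  · next heq => exact hterm g g' heq
  · exact hS0

lemma single_mem_skewSet {k : G} {c : A} (hc : c ∈ P.D k) :
    Finsupp.single k c ∈ P.SkewSet := by
  classical
  intro g
  rw [Finsupp.single_apply]
  split
  · next h => exact h ▸ hc
  · exact (P.D g).zero_mem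

lemma mem_D_one (r : A) : r ∈ P.D 1 := by
  rw [P.D_one]; exact TwoSidedIdeal.mem_top _

lemma key_term_mem {I : TwoSidedIdeal A} (hI : P.GInvariant I) {g g' : G} {a b : A}
    (ha : a ∈ P.D g) (hb : b ∈ P.D g') (hab : a ∈ I ∨ b ∈ I) :
    P.act g (P.act g⁻¹ a * b) ∈ P.D (g * g') ∧ P.act g (P.act g⁻¹ a * b) ∈ I := by
  have hc : P.act g⁻¹ a ∈ P.D g⁻¹ := P.mem_D_of_mem g ha
  have hprod₁ : P.act g⁻¹ a * b ∈ P.D g⁻¹ := TwoSidedIdeal.mul_mem_right _ _ _ hc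
  have hprod₂ : P.act g⁻¹ a * b ∈ P.D g' := TwoSidedIdeal.mul_mem_left _ _ _ hb
  have hprodI : P.act g⁻¹ a * b ∈ I := by
    rcases hab with h | h
    · have : P.act g⁻¹ a ∈ I := hI g⁻¹ a h (by simpa using ha)
      exact TwoSidedIdeal.mul_mem_right _ _ _ this
    · exact TwoSidedIdeal.mul_mem_left _ _ _ h
  exact ⟨P.act_mem_mul g g' hprod₁ hprod₂, hI g _ hprodI hprod₁⟩

theorem gsimple_of_skewSimple (hS : P.SkewSimple) : P.GSimple := by
  classical
  intro I hI
  set C : Set (G →₀ A) := {f | ∀ g, f g ∈ P.D g ∧ f g ∈ I} with hC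
  have hCideal : P.IsSkewIdeal C := by
    refine ⟨fun f hf g => (hf g).1, ?_, ?_, ?_, ?_⟩
    · intro g
      simp only [Finsupp.coe_zero, Pi.zero_apply]
      exact ⟨(P.D g).zero_mem, I.zero_mem⟩
    · intro f hf h hh g
      simp only [Finsupp.add_apply]
      exact ⟨(P.D g).add_mem (hf g).1 (hh g).1, I.add_mem (hf g).2 (hh g).2⟩
    · intro f hf g
      simp only [Finsupp.neg_apply]
      exact ⟨(P.D g).neg_mem (hf g).1, I.neg_mem (hf g).2⟩
    · intro f hf h hh
      constructor
      · intro w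
        refine P.skewMul_apply_mem {x | x ∈ P.D w ∧ x ∈ I} ⟨(P.D w).zero_mem, I.zero_mem⟩
          (fun a ha b hb => ⟨(P.D w).add_mem ha.1 hb.1, I.add_mem ha.2 hb.2⟩) f h w ?_
        intro g g' hgg'
        have hk := P.key_term_mem hI (hf g).1 (hh g') (Or.inl (hf g).2)
        rw [hgg'] at hk
        exact hk
      · intro w
        refine P.skewMul_apply_mem {x | x ∈ P.D w ∧ x ∈ I} ⟨(P.D w).zero_mem, I.zero_mem⟩
          (fun a ha b hb => ⟨(P.D w).add_mem ha.1 hb.1, I.add_mem ha.2 hb.2⟩) h f w ?_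
        intro g g' hgg'
        have hk := P.key_term_mem hI (hh g) (hf g').1 (Or.inr (hf g').2)
        rw [hgg'] at hk
        exact hk
  rcases hS C hCideal with h0 | htop
  · left
    refine TwoSidedIdeal.ext fun x => ?_
    rw [TwoSidedIdeal.mem_bot]
    constructor
    · intro hx
      have hx1 : Finsupp.single (1:G) x ∈ C := by
        intro g
        rw [Finsupp.single_apply]
        split
        · next h => exact ⟨h ▸ P.mem_D_one x, hx⟩
        · exact ⟨(P.D g).zero_mem, I.zero_mem⟩
      rw [h0] at hx1
      exact Finsupp.single_eq_zero.mp (Set.mem_singleton_iff.mp hx1)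
    · rintro rfl; exact I.zero_mem
  · right
    refine TwoSidedIdeal.ext fun x => ?_
    constructor
    · intro _; exact TwoSidedIdeal.mem_top _
    · intro _
      have hx1 : Finsupp.single (1:G) x ∈ C := by
        rw [htop]; exact P.single_mem_skewSet (P.mem_D_one x)
      have := (hx1 1).2
      rwa [Finsupp.single_eq_same] at this


end GroupAux

section Comm

variable {G A : Type*} [CommGroup G] [NonUnitalRing A] (P : RingPartialAction G A)

private lemma conj_aux1 (g w : G) : g⁻¹ * (w * g) = w := by
  rw [mul_comm w g, ← mul_assoc]
  group

theorem skewSimple_of_gsimple (hGS : P.GSimple) (hout : P.Outer)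
    (hlu : ∀ g : G, HasLocalUnitsOn (P.D g : Set A)) : P.SkewSimple := by
  classical
  intro T hT
  obtain ⟨hTsub, hT0, hTadd, hTneg, hTmul⟩ := hT
  by_cases hTtriv : T = {0}
  · exact Or.inl hTtriv
  refine Or.inr ?_
  have hex : ∃ f, f ∈ T ∧ f ≠ 0 := by
    by_contra hc
    push_neg at hc
    exact hTtriv (Set.eq_singleton_iff_unique_mem.mpr ⟨hT0, fun f hf => hc f hf⟩)
  obtain ⟨f₀, hf₀T, hf₀ne⟩ := hex
  -- minimal support cardinality
  obtain ⟨n₀, hn₀mem, hn₀min⟩ : ∃ n, (∃ f, f ∈ T ∧ f ≠ 0 ∧ f.support.card = n) ∧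
      ∀ m, (∃ f, f ∈ T ∧ f ≠ 0 ∧ f.support.card = m) → n ≤ m := by
    have hScard : {m | ∃ f, f ∈ T ∧ f ≠ 0 ∧ f.support.card = m}.Nonempty :=
      ⟨_, f₀, hf₀T, hf₀ne, rfl⟩
    exact ⟨sInf _, Nat.sInf_mem hScard, fun m hm => Nat.sInf_le hm⟩
  obtain ⟨h₀, hh₀T, hh₀ne, hh₀card⟩ := hn₀mem
  have hmin : ∀ f, f ∈ T → f ≠ 0 → n₀ ≤ f.support.card :=
    fun f hf hne => hn₀min _ ⟨f, hf, hne, rfl⟩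
  -- coefficient formulas for multiplying by `single 1 r`
  have hLcoeff : ∀ (r : A) (p : G →₀ A) (w : G),
      P.skewMul (Finsupp.single 1 r) p w = r * p w := by
    intro r p w
    rw [P.skewMul_single_left_apply]
    simp [P.act_one]
  have hRcoeff : ∀ (p : G →₀ A) (r : A) (w : G),
      P.skewMul p (Finsupp.single 1 r) w = P.act w (P.act w⁻¹ (p w) * r) := by
    intro p r w
    rw [P.skewMul_single_right_apply]
    simp
  -- translation lemma
  have htrans : ∀ p, p ∈ T → ∀ t : G, ∃ q, q ∈ T ∧
      (∀ w, q w ≠ 0 → p (w * t) ≠ 0) ∧ q 1 = p t := by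
    intro p hp t
    obtain ⟨e, heD, -, he⟩ := hlu t {p t} (by simpa using hTsub hp t)
    refine ⟨P.skewMul p (Finsupp.single t⁻¹ (P.act t⁻¹ e)),
      (hTmul p hp _ (P.single_mem_skewSet (P.mem_D_of_mem t heD))).1, ?_, ?_⟩
    · intro w hw h0
      apply hw
      rw [P.skewMul_single_right_apply, inv_inv, h0]
      simp [P.act_zero]
    · rw [P.skewMul_single_right_apply]
      simp only [one_mul, inv_inv]
      rw [← P.act_mul t⁻¹ _ (by simpa using hTsub hp t) _ (by simpa using heD),
        (he _ (Finset.mem_singleton_self _)).2]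
      exact P.act_act_inv t (hTsub hp t)
  -- a minimal element with 1 in its support
  obtain ⟨g₀, hg₀⟩ := Finsupp.support_nonempty_iff.mpr hh₀ne
  have hb₀ne : h₀ g₀ ≠ 0 := Finsupp.mem_support_iff.mp hg₀
  obtain ⟨h1, hh1T, hh1supp, hh1_1⟩ := htrans h₀ hh₀T g₀
  have hh1_1ne : h1 1 ≠ 0 := by rw [hh1_1]; exact hb₀ne
  have hh1ne : h1 ≠ 0 := by intro h; exact hh1_1ne (by rw [h]; rfl)
  have hcard_le : h1.support.card ≤ h₀.support.card := by
    refine Finset.card_le_card_of_injOn (fun w => w * g₀) ?_ ?_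
    · intro w hw
      exact Finsupp.mem_support_iff.mpr (hh1supp w (Finsupp.mem_support_iff.mp hw))
    · intro a _ b _ hab
      exact mul_right_cancel hab
  have hh1card : h1.support.card = n₀ :=
    le_antisymm (by rw [← hh₀card]; exact hcard_le) (hmin h1 hh1T hh1ne)
  set H := h1.support with hHdef
  have h1H : (1:G) ∈ H := Finsupp.mem_support_iff.mpr hh1_1ne
  have hn₀pos : 0 < n₀ := by rw [← hh1card]; exact Finset.card_pos.mpr ⟨1, h1H⟩
  -- uniqueness from minimality
  have huniq : ∀ (H' : Finset G) (t : G), t ∈ H' → H'.card = n₀ →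
      ∀ p, p ∈ T → ∀ q, q ∈ T → p.support ⊆ H' → q.support ⊆ H' → p t = q t → p = q := by
    intro H' t htH' hcard p hp q hq hps hqs heq
    by_contra hne
    have hd : p + -q ∈ T := hTadd p hp _ (hTneg q hq)
    have hdne : p + -q ≠ 0 := by
      intro h
      apply hne
      have h' := congrArg (· + q) h
      simpa using h'
    have hdsupp : (p + -q).support ⊆ H'.erase t := by
      intro w hw
      rw [Finset.mem_erase]
      refine ⟨?_, ?_⟩
      · intro hwt
        subst hwt
        rw [Finsupp.mem_support_iff] at hw
        apply hw
        simp [heq]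
      · have := Finsupp.support_add hw
        rw [Finset.mem_union, Finsupp.support_neg] at this
        rcases this with h | h
        · exact hps h
        · exact hqs h
    have hle := Finset.card_le_card hdsupp
    rw [Finset.card_erase_of_mem htH', hcard] at hle
    have := hmin _ hd hdne
    omega
  -- conjugation construction
  have hconj : ∀ (g : G) (ε : A), ε ∈ P.D g⁻¹ → ∀ p, p ∈ T →
      ∃ q, q ∈ T ∧ (∀ w, q w = P.act (w * g) (P.act (w * g)⁻¹ (P.act g (ε * p w)) * ε)) := by
    intro g ε hε p hp
    have hgε : P.act g ε ∈ P.D g := P.act_mem g ε hε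
    refine ⟨P.skewMul (P.skewMul (Finsupp.single g (P.act g ε)) p) (Finsupp.single g⁻¹ ε),
      (hTmul _ ((hTmul p hp _ (P.single_mem_skewSet hgε)).2) _ (P.single_mem_skewSet hε)).1, ?_⟩
    intro w
    rw [P.skewMul_single_right_apply, inv_inv, P.skewMul_single_left_apply,
      P.act_inv g ε hε, conj_aux1]
  -- the basepoint-coefficient ideal
  have hideal : ∀ (H' : Finset G),
      (∃ p, p ∈ T ∧ p.support ⊆ H' ∧ p 1 ≠ 0) →
      ∀ x : A, ∃ p, p ∈ T ∧ p.support ⊆ H' ∧ p 1 = x := by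
    intro H' hw x
    obtain ⟨p₁, hp₁T, hp₁s, hp₁ne⟩ := hw
    set C : Set A := {x | ∃ p, p ∈ T ∧ p.support ⊆ H' ∧ p 1 = x} with hCdef
    have hC0 : (0:A) ∈ C := ⟨0, hT0, by simp, rfl⟩
    have hCadd : ∀ {a b : A}, a ∈ C → b ∈ C → a + b ∈ C := by
      rintro a b ⟨p, hpT, hps, rfl⟩ ⟨q, hqT, hqs, rfl⟩
      refine ⟨p + q, hTadd p hpT q hqT, ?_, rfl⟩
      intro w hw'
      rcases Finset.mem_union.mp (Finsupp.support_add hw') with h | h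
      · exact hps h
      · exact hqs h
    have hCneg : ∀ {a : A}, a ∈ C → -a ∈ C := by
      rintro a ⟨p, hpT, hps, rfl⟩
      exact ⟨-p, hTneg p hpT, by rw [Finsupp.support_neg]; exact hps, rfl⟩
    have hCml : ∀ {r a : A}, a ∈ C → r * a ∈ C := by
      rintro r a ⟨p, hpT, hps, rfl⟩
      refine ⟨P.skewMul (Finsupp.single 1 r) p,
        (hTmul p hpT _ (P.single_mem_skewSet (P.mem_D_one r))).2, ?_, hLcoeff r p 1⟩
      intro w hw'
      apply hps
      rw [Finsupp.mem_support_iff] at hw' ⊢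
      intro h0
      apply hw'
      rw [hLcoeff, h0, mul_zero]
    have hCmr : ∀ {a r : A}, a ∈ C → a * r ∈ C := by
      rintro a r ⟨p, hpT, hps, rfl⟩
      refine ⟨P.skewMul p (Finsupp.single 1 r),
        (hTmul p hpT _ (P.single_mem_skewSet (P.mem_D_one r))).1, ?_, ?_⟩
      · intro w hw'
        apply hps
        rw [Finsupp.mem_support_iff] at hw' ⊢
        intro h0
        apply hw'
        rw [hRcoeff, h0]
        simp [P.act_zero]
      · rw [hRcoeff]
        simp [P.act_one]
    have hinv : P.GInvariant (TwoSidedIdeal.mk' C hC0 hCadd hCneg hCml hCmr) := by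
      intro g x hx hxD
      rw [TwoSidedIdeal.mem_mk'] at hx ⊢
      obtain ⟨p, hpT, hps, hp1⟩ := hx
      obtain ⟨ε, hεD, -, hε⟩ := hlu g⁻¹ {x} (by simpa using hxD)
      obtain ⟨q, hqT, hq⟩ := hconj g ε hεD p hpT
      refine ⟨q, hqT, ?_, ?_⟩
      · intro w hw'
        apply hps
        rw [Finsupp.mem_support_iff] at hw' ⊢
        intro h0
        apply hw'
        rw [hq, h0, mul_zero, P.act_zero, P.act_zero, zero_mul, P.act_zero]
      · rw [hq, one_mul, hp1, P.act_inv g _ (TwoSidedIdeal.mul_mem_right _ _ _ hεD),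
          (hε x (Finset.mem_singleton_self x)).1, (hε x (Finset.mem_singleton_self x)).2]
    rcases hGS _ hinv with hbot | htop
    · exfalso
      have hmem : p₁ 1 ∈ TwoSidedIdeal.mk' C hC0 hCadd hCneg hCml hCmr := by
        rw [TwoSidedIdeal.mem_mk']
        exact ⟨p₁, hp₁T, hp₁s, rfl⟩
      rw [hbot, TwoSidedIdeal.mem_bot] at hmem
      exact hp₁ne hmem
    · have hmem : x ∈ TwoSidedIdeal.mk' C hC0 hCadd hCneg hCml hCmr := by
        rw [htop]; exact TwoSidedIdeal.mem_top _
      rw [TwoSidedIdeal.mem_mk'] at hmem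
      exact hmem
  have hfam1 := hideal H ⟨h1, hh1T, Finset.Subset.refl _, hh1_1ne⟩
  choose pp hppT hpps hpp1 using hfam1
  rcases (by omega : n₀ = 1 ∨ 2 ≤ n₀) with hn1 | hn2
  · -- n₀ = 1 : T = SkewSet
    have hH1 : H = {1} := by
      have hc1 : H.card = 1 := by rw [hh1card, hn1]
      obtain ⟨a, ha⟩ := Finset.card_eq_one.mp hc1
      rw [ha] at h1H ⊢
      rw [Finset.mem_singleton] at h1H
      rw [h1H]
    have hsingle : ∀ x : A, Finsupp.single 1 x ∈ T := by
      intro x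
      have hp := hppT x
      have hpx : pp x = Finsupp.single 1 x := by
        ext w
        rw [Finsupp.single_apply]
        split
        · next h => rw [← h]; exact hpp1 x
        · next h =>
            by_contra hne
            have hmem : w ∈ H := hpps x (Finsupp.mem_support_iff.mpr hne)
            rw [hH1, Finset.mem_singleton] at hmem
            exact h hmem.symm
      rwa [hpx] at hp
    apply Set.Subset.antisymm hTsub
    intro f hf
    have hsum : f.support.sum (fun g => Finsupp.single g (f g)) ∈ T := by
      refine Finset.sum_induction _ (· ∈ T) (fun a b ha hb => hTadd a ha b hb) hT0 ?_
      intro g hg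
      obtain ⟨e, heD, -, he⟩ := hlu g {f g} (by simpa using hf g)
      have heq : Finsupp.single g (f g)
          = P.skewMul (Finsupp.single 1 (f g)) (Finsupp.single g e) := by
        ext w
        rw [hLcoeff, Finsupp.single_apply, Finsupp.single_apply]
        split
        · exact ((he _ (Finset.mem_singleton_self _)).2).symm
        · rw [mul_zero]
      rw [heq]
      exact (hTmul _ (hsingle (f g)) _ (P.single_mem_skewSet heD)).1
    have hfs : f.sum (fun g a => Finsupp.single g a) = f := Finsupp.sum_single f
    rw [Finsupp.sum] at hfs
    rw [← hfs]
    exact hsum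
  · -- n₀ ≥ 2 : contradiction with outerness
    obtain ⟨u, hune, huu, houtu⟩ := hout
    have h2n : 1 < H.card := by rw [hh1card]; omega
    obtain ⟨s, hsH, hs1⟩ := Finset.exists_mem_ne h2n 1
    have hbsne : h1 s ≠ 0 := Finsupp.mem_support_iff.mp hsH
    have hΦD : ∀ x, pp x s ∈ P.D s := fun x => hTsub (hppT x) s
    have huniq1 : ∀ p, p ∈ T → p.support ⊆ H → p = pp (p 1) :=
      fun p hp hps => huniq H 1 h1H hh1card p hp (pp (p 1)) (hppT _) hps (hpps _) (hpp1 _).symm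
    have hΦinj : ∀ x y, pp x s = pp y s → x = y := by
      intro x y hxy
      have h := huniq H s hsH hh1card (pp x) (hppT x) (pp y) (hppT y) (hpps x) (hpps y) hxy
      rw [← hpp1 x, ← hpp1 y, h]
    have hΦL : ∀ r x, pp (r * x) s = r * pp x s := by
      intro r x
      have hmem : P.skewMul (Finsupp.single 1 r) (pp x) ∈ T :=
        (hTmul (pp x) (hppT x) _ (P.single_mem_skewSet (P.mem_D_one r))).2
      have hsupp : (P.skewMul (Finsupp.single 1 r) (pp x)).support ⊆ H := by
        intro w hw
        apply hpps x
        rw [Finsupp.mem_support_iff] at hw ⊢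
        intro h0
        apply hw
        rw [hLcoeff, h0, mul_zero]
      have hq := huniq1 _ hmem hsupp
      have h1v : P.skewMul (Finsupp.single 1 r) (pp x) 1 = r * x := by rw [hLcoeff, hpp1]
      rw [h1v] at hq
      rw [← hq, hLcoeff]
    have hΦR : ∀ x r, pp (x * r) s = P.act s (P.act s⁻¹ (pp x s) * r) := by
      intro x r
      have hmem : P.skewMul (pp x) (Finsupp.single 1 r) ∈ T :=
        (hTmul (pp x) (hppT x) _ (P.single_mem_skewSet (P.mem_D_one r))).1
      have hsupp : (P.skewMul (pp x) (Finsupp.single 1 r)).support ⊆ H := by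
        intro w hw
        apply hpps x
        rw [Finsupp.mem_support_iff] at hw ⊢
        intro h0
        apply hw
        rw [hRcoeff, h0]
        simp [P.act_zero]
      have hq := huniq1 _ hmem hsupp
      have h1v : P.skewMul (pp x) (Finsupp.single 1 r) 1 = x * r := by
        rw [hRcoeff]
        simp [P.act_one, hpp1]
      rw [h1v] at hq
      rw [← hq, hRcoeff]
    have hDsinv : ∀ x : A, x ∈ P.D s⁻¹ := by
      intro x
      obtain ⟨c, hcD, -, hc⟩ := hlu s⁻¹ {P.act s⁻¹ (pp x s)}
        (by simpa using P.mem_D_of_mem s (hΦD x))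
      have h1' : pp (x * c) s = pp x s := by
        rw [hΦR x c, (hc _ (Finset.mem_singleton_self _)).2]
        exact P.act_act_inv s (hΦD x)
      have h := hΦinj _ _ h1'
      rw [← h]
      exact TwoSidedIdeal.mul_mem_left _ _ _ hcD
    -- the second family, based at the translated support
    set H₂ := H.image (· * s⁻¹) with hH₂def
    have hH₂card : H₂.card = n₀ := by
      rw [hH₂def, Finset.card_image_of_injective _ (fun a b hab => mul_right_cancel hab), hh1card]
    have h1H₂ : (1:G) ∈ H₂ := by
      rw [hH₂def, Finset.mem_image]; exact ⟨s, hsH, by group⟩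
    have hsiH₂ : s⁻¹ ∈ H₂ := by
      rw [hH₂def, Finset.mem_image]; exact ⟨1, h1H, by group⟩
    have hmemH₂ : ∀ w : G, w * s ∈ H → w ∈ H₂ := by
      intro w hw
      rw [hH₂def, Finset.mem_image]
      exact ⟨w * s, hw, by group⟩
    have hmemH₂' : ∀ w : G, w * s⁻¹ ∈ H₂ → w ∈ H := by
      intro w hw
      rw [hH₂def, Finset.mem_image] at hw
      obtain ⟨v, hv, hveq⟩ := hw
      have hvw : v = w := mul_right_cancel hveq
      rwa [← hvw]
    obtain ⟨w₂, hw₂T, hw₂supp, hw₂1⟩ := htrans h1 hh1T s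
    have hw₂s : w₂.support ⊆ H₂ := by
      intro w hw
      exact hmemH₂ w (Finsupp.mem_support_iff.mpr (hw₂supp w (Finsupp.mem_support_iff.mp hw)))
    have hfam2 := hideal H₂ ⟨w₂, hw₂T, hw₂s, by rw [hw₂1]; exact hbsne⟩
    choose qq hqqT hqqs hqq1 using hfam2
    have huniq2 : ∀ p, p ∈ T → p.support ⊆ H₂ → p = qq (p 1) :=
      fun p hp hps => huniq H₂ 1 h1H₂ hH₂card p hp (qq (p 1)) (hqqT _) hps (hqqs _) (hqq1 _).symm
    have hΨD : ∀ y, qq y s⁻¹ ∈ P.D s⁻¹ := fun y => hTsub (hqqT y) s⁻¹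
    have hΨinj : ∀ x y, qq x s⁻¹ = qq y s⁻¹ → x = y := by
      intro x y hxy
      have h := huniq H₂ s⁻¹ hsiH₂ hH₂card (qq x) (hqqT x) (qq y) (hqqT y) (hqqs x) (hqqs y) hxy
      rw [← hqq1 x, ← hqq1 y, h]
    have hΨR : ∀ y r, qq (y * r) s⁻¹ = P.act s⁻¹ (P.act s (qq y s⁻¹) * r) := by
      intro y r
      have hmem : P.skewMul (qq y) (Finsupp.single 1 r) ∈ T :=
        (hTmul (qq y) (hqqT y) _ (P.single_mem_skewSet (P.mem_D_one r))).1
      have hsupp : (P.skewMul (qq y) (Finsupp.single 1 r)).support ⊆ H₂ := by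
        intro w hw
        apply hqqs y
        rw [Finsupp.mem_support_iff] at hw ⊢
        intro h0
        apply hw
        rw [hRcoeff, h0]
        simp [P.act_zero]
      have hq := huniq2 _ hmem hsupp
      have h1v : P.skewMul (qq y) (Finsupp.single 1 r) 1 = y * r := by
        rw [hRcoeff]
        simp [P.act_one, hqq1]
      rw [h1v] at hq
      rw [← hq, hRcoeff, inv_inv]
    have hDs : ∀ x : A, x ∈ P.D s := by
      intro x
      obtain ⟨c, hcD, -, hc⟩ := hlu s {P.act s (qq x s⁻¹)}
        (by simpa using P.act_mem s _ (hΨD x))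
      have h1' : qq (x * c) s⁻¹ = qq x s⁻¹ := by
        rw [hΨR x c, (hc _ (Finset.mem_singleton_self _)).2]
        exact P.act_inv s _ (hΨD x)
      have h := hΨinj _ _ h1'
      rw [← h]
      exact TwoSidedIdeal.mul_mem_left _ _ _ hcD
    -- the (now global) automorphism facts
    have hσmul : ∀ x y : A, P.act s (x * y) = P.act s x * P.act s y :=
      fun x y => P.act_mul s x (hDsinv x) y (hDsinv y)
    have hστ : ∀ x : A, P.act s (P.act s⁻¹ x) = x := fun x => P.act_act_inv s (hDs x)
    have hτσ : ∀ x : A, P.act s⁻¹ (P.act s x) = x := fun x => P.act_inv s x (hDsinv x)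
    have hstar : ∀ z y : A, z * pp y s = pp z s * P.act s y := by
      intro z y
      have h2 := hΦR z y
      rw [hσmul, hστ] at h2
      rw [← hΦL z y]
      exact h2
    -- pairing
    have hpair : ∀ (y c' : A), pp (P.act s⁻¹ (P.act s (qq y s⁻¹) * c')) s = y * c' := by
      intro y c'
      have hqT : P.skewMul (qq y) (Finsupp.single s c') ∈ T :=
        (hTmul (qq y) (hqqT y) _ (P.single_mem_skewSet (hDs c'))).1
      have hqw : ∀ w, P.skewMul (qq y) (Finsupp.single s c') w
          = P.act (w * s⁻¹) (P.act (w * s⁻¹)⁻¹ (qq y (w * s⁻¹)) * c') := by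
        intro w
        rw [P.skewMul_single_right_apply]
      have hqsupp : (P.skewMul (qq y) (Finsupp.single s c')).support ⊆ H := by
        intro w hw
        rw [Finsupp.mem_support_iff] at hw
        have hne : qq y (w * s⁻¹) ≠ 0 := by
          intro h0
          apply hw
          rw [hqw, h0]
          simp [P.act_zero]
        exact hmemH₂' w (hqqs y (Finsupp.mem_support_iff.mpr hne))
      have hq1 : P.skewMul (qq y) (Finsupp.single s c') 1
          = P.act s⁻¹ (P.act s (qq y s⁻¹) * c') := by
        rw [hqw, one_mul, inv_inv]
      have hqs' : P.skewMul (qq y) (Finsupp.single s c') s = y * c' := by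
        rw [hqw]
        simp [P.act_one, hqq1]
      have hu := huniq1 _ hqT hqsupp
      rw [hq1] at hu
      rw [← hu, hqs']
    -- implementing elements
    obtain ⟨e₀, -, -, he₀⟩ := hlu 1 {u} (by intro x _; exact SetLike.mem_coe.mpr (P.mem_D_one x))
    have he₀u := he₀ u (Finset.mem_singleton_self u)
    have hΦt₀ : pp (P.act s⁻¹ (P.act s (qq (P.act s u) s⁻¹) * P.act s e₀)) s = P.act s u := by
      rw [hpair (P.act s u) (P.act s e₀), ← hσmul, he₀u.2]
    set t₀ := P.act s⁻¹ (P.act s (qq (P.act s u) s⁻¹) * P.act s e₀) with ht₀def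
    have ht₀u : t₀ * u = t₀ := by
      apply hΦinj
      rw [hΦR t₀ u, hΦt₀, hτσ, huu]
    have hub : u * pp u s = pp u s := by
      have h := hΦL u u
      rw [huu] at h
      exact h.symm
    have hz₀b : t₀ * pp u s = P.act s u := by
      have h := hΦL t₀ u
      rw [ht₀u, hΦt₀] at h
      exact h.symm
    have hbσu : pp u s * P.act s u = pp u s := by
      have h := hstar u u
      rw [hub] at h
      exact h.symm
    have hσuσu : P.act s u * P.act s u = P.act s u := by
      rw [← hσmul, huu]
    have habs : ∀ v : A, u * (u * v * u) = u * v * u := by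
      intro v
      rw [← mul_assoc, ← mul_assoc, huu]
    have hkey : ∀ v : A, P.act s (u * v * u) = t₀ * (u * v * u) * pp u s := by
      intro v
      have h1 : pp (u * v * u) s = u * v * u * pp u s := by
        rw [hΦL (u * v) u, mul_assoc (u * v) u (pp u s), hub]
      have h2 := hstar t₀ (u * v * u)
      rw [h1, hΦt₀, ← hσmul, habs v] at h2
      rw [← h2, ← mul_assoc]
    have ha_eq : u * pp u s * P.act s u = pp u s := by rw [hub, hbσu]
    have hzu : (pp u s * t₀ * u) * u = pp u s * t₀ * u := by
      rw [mul_assoc (pp u s * t₀) u u, huu]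
    have hzΦ : (pp u s * t₀ * u) * pp u s = pp u s := by
      rw [mul_assoc (pp u s * t₀) u (pp u s), hub, mul_assoc (pp u s) t₀ (pp u s), hz₀b, hbσu]
    have hz : pp u s * t₀ * u = u := by
      have h := hΦL (pp u s * t₀ * u) u
      rw [hzu, hzΦ] at h
      exact hΦinj _ _ h
    have hab : (u * pp u s * P.act s u) * (P.act s u * t₀ * u) = u := by
      rw [ha_eq, ← mul_assoc, ← mul_assoc, hbσu]
      exact hz
    have hba : (P.act s u * t₀ * u) * (u * pp u s * P.act s u) = P.act s u := by
      rw [ha_eq, mul_assoc (P.act s u * t₀) u (pp u s), hub,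
        mul_assoc (P.act s u) t₀ (pp u s), hz₀b, hσuσu]
    have haction : ∀ c : A, P.act s (u * c * u)
        = (P.act s u * t₀ * u) * (u * c * u) * (u * pp u s * P.act s u) := by
      intro c
      rw [ha_eq]
      symm
      calc (P.act s u * t₀ * u) * (u * c * u) * pp u s
          = P.act s u * (t₀ * (u * c * u) * pp u s) := by
            rw [mul_assoc (P.act s u * t₀) u (u * c * u), habs c,
              mul_assoc (P.act s u) t₀ (u * c * u),
              mul_assoc (P.act s u) (t₀ * (u * c * u)) (pp u s)]
        _ = P.act s u * P.act s (u * c * u) := by rw [← hkey c]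
        _ = P.act s (u * (u * c * u)) := (hσmul _ _).symm
        _ = P.act s (u * c * u) := by rw [habs c]
    have hinner : P.InnerAt s u :=
      ⟨hDsinv u, u * pp u s * P.act s u, P.act s u * t₀ * u,
        ⟨pp u s, rfl⟩, ⟨t₀, rfl⟩, hab, hba, haction⟩
    exact absurd hinner (houtu s hs1)

end Comm

end RingPartialAction

/-- Theorem 1.2: if `α` is an outer partial action of an abelian
group `G` on a ring `A` such that each `D g` has local units, then the partial
skew group ring `A ⋆_α G` is simple if and only if `A` is `G`-simple. -/
theorem stmt10 {G A : Type*} [CommGroup G] [NonUnitalRing A]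
    (P : RingPartialAction G A)
    (houter : P.Outer)
    (hlu : ∀ g : G, HasLocalUnitsOn (P.D g : Set A)) :
    P.SkewSimple ↔ P.GSimple :=
  ⟨fun h => P.gsimple_of_skewSimple h, fun h => P.skewSimple_of_gsimple h houter hlu⟩
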